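/- Fix p > 0 and λ > 1. Let ξ₁, ξ₂, … be i.i.d. exponential(1) random variables with partial sums S_k, and M_λ = sup_{k ≥ 0}(S_k − λk). For each n, let Y₁ < ⋯ < Y_n denote the order statistics of (S₁/S_n, …, S_n/S_n) (distributed as uniform order statistics), and let σ_n be any random variable with values in {1, …, n}, arbitrarily dependent on everything. Then limsup_{n→∞} n^p E[Y_{σ_n}^p] ≤ c_p λ^p limsup_{n→∞} E[σ_n^p] + c_p E[M_λ^p], where c_p = max(2^{p−1}, 1). -/

import Mathlib

open MeasureTheory ProbabilityTheory Filter Set Real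
open scoped ENNReal NNReal Topology

/-!
Write `S_k = ξ₁ + ⋯ + ξ_k`, `M = sup_k (S_k - λ k)` and fix `θ < 1`. On the event `S_n > θ n`,
`n S_σ / S_n ≤ θ⁻¹ S_σ ≤ θ⁻¹ (λ σ + M)`, and `(x + y)^p ≤ c_p (x^p + y^p)` splits the two terms.
On the complementary event `S_n ≤ θ n` the ratio is at most `1`, so this event contributes at
most `n^p P(S_n ≤ θ n)`, which tends to `0` by a Chernoff bound. Hence the `limsup` is at most
`θ^(-p)` times the right-hand side, and we let `θ → 1`. That `M` is a.s. finite is a second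
Chernoff bound, for `P(S_k ≥ λ k)`, combined with Borel–Cantelli.
-/

lemma lintegral_exp_mul_expMeasure {r t : ℝ} (hr : 0 < r) (ht : t < r) :
    ∫⁻ x, ENNReal.ofReal (rexp (t * x)) ∂expMeasure r = ENNReal.ofReal (r / (r - t)) := by
  have hdens : ∀ x, exponentialPDF r x * ENNReal.ofReal (rexp (t * x)) =
      (Ici 0).indicator (fun x => ENNReal.ofReal (r * rexp ((t - r) * x))) x := by
    intro x
    rcases le_or_gt 0 x with hx | hx
    · rw [indicator_of_mem (mem_Ici.2 hx), exponentialPDF_of_nonneg hx,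
        ← ENNReal.ofReal_mul (by positivity), mul_assoc, ← Real.exp_add]
      ring_nf
    · simp [exponentialPDF_of_neg hx, hx]
  have hint : IntegrableOn (fun x => r * rexp ((t - r) * x)) (Ioi 0) :=
    (integrableOn_exp_mul_Ioi (by linarith) 0).const_mul r
  rw [expMeasure, gammaMeasure, lintegral_withDensity_eq_lintegral_mul (f := gammaPDF 1 r) _
    (measurable_gammaPDFReal 1 r).ennreal_ofReal (by fun_prop)]
  simp_rw [Pi.mul_apply]
  refine (lintegral_congr hdens).trans ?_
  rw [lintegral_indicator measurableSet_Ici, setLIntegral_congr Ioi_ae_eq_Ici.symm,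
    ← ofReal_integral_eq_lintegral_ofReal hint (ae_of_all _ fun x => by positivity),
    integral_const_mul, integral_exp_mul_Ioi (by linarith), mul_zero, exp_zero, neg_div,
    ← div_neg, neg_sub, mul_one_div]

lemma integrable_exp_mul_expMeasure {r t : ℝ} (hr : 0 < r) (ht : t < r) :
    Integrable (fun x => rexp (t * x)) (expMeasure r) := by
  refine ⟨by fun_prop, ?_⟩
  rw [hasFiniteIntegral_iff_ofReal (ae_of_all _ fun x => (exp_pos _).le),
    lintegral_exp_mul_expMeasure hr ht]
  exact ENNReal.ofReal_lt_top

lemma mgf_id_expMeasure {r t : ℝ} (hr : 0 < r) (ht : t < r) :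
    mgf id (expMeasure r) t = r / (r - t) := by
  rw [mgf, integral_eq_lintegral_of_nonneg_ae (ae_of_all _ fun x => (exp_pos _).le)
    (by fun_prop)]
  simp only [id, lintegral_exp_mul_expMeasure hr ht]
  exact ENNReal.toReal_ofReal (div_pos hr (by linarith)).le

section ExpRandomVariable

variable {Ω : Type*} [MeasurableSpace Ω] {μ : Measure Ω} {X : Ω → ℝ} {r : ℝ}

lemma integrable_exp_mul_of_map_eq_expMeasure (hX : Measurable X) (hXr : μ.map X = expMeasure r)
    (hr : 0 < r) {t : ℝ} (ht : t < r) : Integrable (fun ω => rexp (t * X ω)) μ := by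
  have := integrable_exp_mul_expMeasure hr ht
  rw [← hXr] at this
  exact this.comp_measurable hX

lemma mgf_of_map_eq_expMeasure (hX : Measurable X) (hXr : μ.map X = expMeasure r)
    (hr : 0 < r) {t : ℝ} (ht : t < r) : mgf X μ t = r / (r - t) := by
  rw [← mgf_id_map hX.aemeasurable, hXr, mgf_id_expMeasure hr ht]

lemma ae_nonneg_of_map_eq_expMeasure (hX : Measurable X) (hXr : μ.map X = expMeasure r) :
    ∀ᵐ ω ∂μ, 0 ≤ X ω := by
  have : expMeasure r (Iio 0) = 0 := by
    rw [expMeasure, gammaMeasure, withDensity_apply _ measurableSet_Iio]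
    exact lintegral_exponentialPDF_of_nonpos le_rfl
  rw [← hXr, Measure.map_apply hX measurableSet_Iio] at this
  exact measure_eq_zero_iff_ae_notMem.1 this |>.mono fun ω h => not_lt.1 h

end ExpRandomVariable

lemma Real.rpow_add_le_max_mul_rpow_add_rpow {a b p : ℝ} (ha : 0 ≤ a) (hb : 0 ≤ b)
    (hp : 0 ≤ p) : (a + b) ^ p ≤ max (2 ^ (p - 1)) 1 * (a ^ p + b ^ p) := by
  rcases le_total 1 p with hp1 | hp1
  · lift a to ℝ≥0 using ha
    lift b to ℝ≥0 using hb
    calc ((a : ℝ) + b) ^ p ≤ 2 ^ (p - 1) * ((a : ℝ) ^ p + (b : ℝ) ^ p) := by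
          exact_mod_cast NNReal.rpow_add_le_mul_rpow_add_rpow a b hp1
      _ ≤ _ := by gcongr; exact le_max_left _ _
  · calc (a + b) ^ p ≤ 1 * (a ^ p + b ^ p) := by
          rw [one_mul]; exact Real.rpow_add_le_add_rpow ha hb hp hp1
      _ ≤ _ := by gcongr; exact le_max_right _ _

lemma rpow_mul_div_le_of_mul_lt {n θ x y a b p : ℝ} (hn : 0 ≤ n) (hθ : 0 < θ) (hy : θ * n < y)
    (hx : 0 ≤ x) (hxab : x ≤ a + b) (ha : 0 ≤ a) (hb : 0 ≤ b) (hp : 0 ≤ p) :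
    (n * (x / y)) ^ p ≤ θ ^ (-p) * (max (2 ^ (p - 1)) 1 * (a ^ p + b ^ p)) := by
  have hy0 : 0 < y := (mul_nonneg hθ.le hn).trans_lt hy
  have hle : n * (x / y) ≤ θ⁻¹ * (a + b) := by
    rw [mul_div_assoc', div_le_iff₀ hy0, inv_mul_eq_div, div_mul_eq_mul_div, le_div_iff₀ hθ]
    nlinarith
  calc (n * (x / y)) ^ p ≤ (θ⁻¹ * (a + b)) ^ p := by gcongr
    _ = θ ^ (-p) * (a + b) ^ p := by
      rw [mul_rpow (by positivity) (by positivity), inv_rpow hθ.le, rpow_neg hθ.le]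
    _ ≤ _ := by gcongr; exact Real.rpow_add_le_max_mul_rpow_add_rpow ha hb hp

lemma rpow_mul_div_le_rpow {n x y p : ℝ} (hn : 0 ≤ n) (hx : 0 ≤ x) (hxy : x ≤ y) (hp : 0 ≤ p) :
    (n * (x / y)) ^ p ≤ n ^ p := by
  have hxy1 : x / y ≤ 1 := div_le_one_of_le₀ hxy (hx.trans hxy)
  gcongr
  · exact mul_nonneg hn (div_nonneg hx (hx.trans hxy))
  · exact mul_le_of_le_one_right hn hxy1

lemma ENNReal.natCast_rpow_eq_ofReal (n : ℕ) {p : ℝ} (hp : 0 ≤ p) :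
    (n : ℝ≥0∞) ^ p = ENNReal.ofReal ((n : ℝ) ^ p) := by
  rw [← ENNReal.ofReal_natCast, ENNReal.ofReal_rpow_of_nonneg n.cast_nonneg hp]

lemma tendsto_rpow_mul_pow_of_lt_one (p : ℝ) {ρ : ℝ} (h0 : 0 ≤ ρ) (h1 : ρ < 1) :
    Tendsto (fun n : ℕ => (n : ℝ) ^ p * ρ ^ n) atTop (𝓝 0) := by
  refine squeeze_zero' (Eventually.of_forall fun n => by positivity) ?_
    (tendsto_pow_const_mul_const_pow_of_lt_one ⌈p⌉₊ h0 h1)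
  filter_upwards [eventually_ge_atTop 1] with n hn
  gcongr
  rw [← rpow_natCast]
  exact rpow_le_rpow_of_exponent_le (by exact_mod_cast hn) (Nat.le_ceil p)

lemma ENNReal.tendsto_rpow_mul_of_le_ofReal_pow {m : ℕ → ℝ≥0∞} {p ρ : ℝ} (hp : 0 ≤ p)
    (h0 : 0 ≤ ρ) (h1 : ρ < 1) (hm : ∀ n, m n ≤ ENNReal.ofReal (ρ ^ n)) :
    Tendsto (fun n : ℕ => (n : ℝ≥0∞) ^ p * m n) atTop (𝓝 0) := by
  have hlim := ENNReal.tendsto_ofReal (tendsto_rpow_mul_pow_of_lt_one p h0 h1)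
  rw [ENNReal.ofReal_zero] at hlim
  refine tendsto_of_tendsto_of_tendsto_of_le_of_le tendsto_const_nhds hlim (fun _ => bot_le)
    fun n => ?_
  rw [ENNReal.ofReal_mul (by positivity), ← ENNReal.natCast_rpow_eq_ofReal n hp]
  gcongr
  exact hm n

lemma ae_bddAbove_range_of_tsum_measure_nonneg_ne_top {Ω : Type*} [MeasurableSpace Ω]
    {μ : Measure Ω} {f : ℕ → Ω → ℝ} (h : ∑' k, μ {ω | 0 ≤ f k ω} ≠ ∞) :
    ∀ᵐ ω ∂μ, BddAbove (range fun k => f k ω) := by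
  filter_upwards [ae_eventually_notMem h] with ω hω
  exact (isBoundedUnder_of_eventually_le (a := 0)
    (hω.mono fun k hk => (not_le.1 hk).le)).bddAbove_range

lemma ENNReal.le_of_forall_lt_one_le_ofReal_rpow_neg_mul {a b : ℝ≥0∞} {p : ℝ}
    (h : ∀ θ : ℝ, 0 < θ → θ < 1 → a ≤ ENNReal.ofReal (θ ^ (-p)) * b) : a ≤ b := by
  have hlim : Tendsto (fun θ : ℝ => ENNReal.ofReal (θ ^ (-p)) * b) (𝓝[<] 1) (𝓝 b) := by
    have := (continuousAt_rpow_const 1 (-p) (Or.inl one_ne_zero)).tendsto.mono_left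
      (nhdsWithin_le_nhds (s := Iio 1))
    simpa only [Real.one_rpow, ENNReal.ofReal_one, one_mul] using
      ENNReal.Tendsto.mul_const (b := b) (ENNReal.tendsto_ofReal this) (Or.inl (by simp))
  refine ge_of_tendsto hlim ?_
  filter_upwards [Ioo_mem_nhdsLT zero_lt_one] with θ hθ using h θ hθ.1 hθ.2

/-- `rexp (-t * a) / (1 - t) = e^{-ta} E[e^{tξ}]` is the Chernoff rate of `ξ ~ Exp(1)`; the tilt
`t = (a - 1) / (2a)` makes it `< 1` through `e^{ta} > 1 + ta`. -/
lemma exists_exp_neg_mul_div_one_sub_lt_one {a : ℝ} (ha : 0 < a) (ha1 : a ≠ 1) :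
    ∃ t < 1, 0 ≤ (a - 1) * t ∧ rexp (-t * a) / (1 - t) < 1 := by
  set t := (a - 1) / (2 * a) with ht
  have hta : t * a = (a - 1) / 2 := by rw [ht]; field_simp
  have h1t : 1 - t = (a + 1) / (2 * a) := by rw [ht]; field_simp; ring
  have h1t_pos : 0 < 1 - t := by rw [h1t]; positivity
  refine ⟨t, by linarith, ?_, ?_⟩
  · rw [ht, ← mul_div_assoc]
    exact div_nonneg (mul_self_nonneg _) (by positivity)
  rw [div_lt_one h1t_pos, neg_mul, exp_neg, inv_lt_comm₀ (exp_pos _) h1t_pos]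
  calc (1 - t)⁻¹ ≤ t * a + 1 := by
        rw [h1t, hta, inv_div, div_le_iff₀ (by positivity)]
        nlinarith [sq_nonneg (a - 1)]
    _ < rexp (t * a) :=
      add_one_lt_exp (by rw [hta]; exact div_ne_zero (sub_ne_zero.2 ha1) two_ne_zero)

section IidExponential

variable {Ω : Type*} [MeasurableSpace Ω] {μ : Measure Ω} {ξ : ℕ → Ω → ℝ}

lemma exp_mul_mgf_sum_range_eq_pow (hmeas : ∀ i, Measurable (ξ i)) (hindep : iIndepFun ξ μ)
    (hdist : ∀ i, μ.map (ξ i) = expMeasure 1) {t : ℝ} (ht : t < 1) (a : ℝ) (n : ℕ) :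
    rexp (-t * (a * n)) * mgf (∑ i ∈ Finset.range n, ξ i) μ t = (rexp (-t * a) / (1 - t)) ^ n := by
  rw [hindep.mgf_sum hmeas, Finset.prod_congr rfl fun i _ =>
    mgf_of_map_eq_expMeasure (hmeas i) (hdist i) one_pos ht, Finset.prod_const,
    Finset.card_range, div_pow, div_pow, one_pow, ← exp_nat_mul, mul_one_div]
  congr 2
  ring

lemma integrable_exp_mul_sum_range (hmeas : ∀ i, Measurable (ξ i)) (hindep : iIndepFun ξ μ)
    (hdist : ∀ i, μ.map (ξ i) = expMeasure 1) {t : ℝ} (ht : t < 1) (n : ℕ) :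
    Integrable (fun ω => rexp (t * (∑ i ∈ Finset.range n, ξ i) ω)) μ :=
  have := hindep.isProbabilityMeasure
  hindep.integrable_exp_mul_sum hmeas fun i _ =>
    integrable_exp_mul_of_map_eq_expMeasure (hmeas i) (hdist i) one_pos ht

lemma exists_measure_sum_range_le_mul_le_pow (hmeas : ∀ i, Measurable (ξ i))
    (hindep : iIndepFun ξ μ) (hdist : ∀ i, μ.map (ξ i) = expMeasure 1) {θ : ℝ} (hθ0 : 0 < θ)
    (hθ1 : θ < 1) : ∃ ρ, 0 ≤ ρ ∧ ρ < 1 ∧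
      ∀ n : ℕ, μ {ω | ∑ i ∈ Finset.range n, ξ i ω ≤ θ * n} ≤ ENNReal.ofReal (ρ ^ n) := by
  have := hindep.isProbabilityMeasure
  obtain ⟨t, ht1, hθt, hρ⟩ := exists_exp_neg_mul_div_one_sub_lt_one hθ0 hθ1.ne
  refine ⟨_, div_nonneg (exp_pos _).le (by linarith), hρ, fun n => ?_⟩
  have ht0 : t ≤ 0 := by nlinarith
  have hchernoff := measure_le_le_exp_mul_mgf (θ * n) ht0
    (integrable_exp_mul_sum_range hmeas hindep hdist ht1 n)
  rw [exp_mul_mgf_sum_range_eq_pow hmeas hindep hdist ht1] at hchernoff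
  simp only [Finset.sum_apply] at hchernoff
  rw [← ofReal_measureReal]
  exact ENNReal.ofReal_le_ofReal hchernoff

lemma exists_measure_mul_le_sum_range_le_pow (hmeas : ∀ i, Measurable (ξ i))
    (hindep : iIndepFun ξ μ) (hdist : ∀ i, μ.map (ξ i) = expMeasure 1) {a : ℝ} (ha : 1 < a) :
    ∃ ρ, 0 ≤ ρ ∧ ρ < 1 ∧
      ∀ n : ℕ, μ {ω | a * n ≤ ∑ i ∈ Finset.range n, ξ i ω} ≤ ENNReal.ofReal (ρ ^ n) := by
  have := hindep.isProbabilityMeasure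
  obtain ⟨t, ht1, hat, hρ⟩ := exists_exp_neg_mul_div_one_sub_lt_one (by linarith) ha.ne'
  refine ⟨_, div_nonneg (exp_pos _).le (by linarith), hρ, fun n => ?_⟩
  have ht0 : 0 ≤ t := by nlinarith
  have hchernoff := measure_ge_le_exp_mul_mgf (a * n) ht0
    (integrable_exp_mul_sum_range hmeas hindep hdist ht1 n)
  rw [exp_mul_mgf_sum_range_eq_pow hmeas hindep hdist ht1] at hchernoff
  simp only [Finset.sum_apply] at hchernoff
  rw [← ofReal_measureReal]
  exact ENNReal.ofReal_le_ofReal hchernoff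

lemma tendsto_rpow_mul_measure_sum_range_le_mul (hmeas : ∀ i, Measurable (ξ i))
    (hindep : iIndepFun ξ μ) (hdist : ∀ i, μ.map (ξ i) = expMeasure 1) {p θ : ℝ} (hp : 0 ≤ p)
    (hθ0 : 0 < θ) (hθ1 : θ < 1) :
    Tendsto (fun n : ℕ => (n : ℝ≥0∞) ^ p * μ {ω | ∑ i ∈ Finset.range n, ξ i ω ≤ θ * n})
      atTop (𝓝 0) := by
  obtain ⟨ρ, h0, h1, hρ⟩ := exists_measure_sum_range_le_mul_le_pow hmeas hindep hdist hθ0 hθ1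
  exact ENNReal.tendsto_rpow_mul_of_le_ofReal_pow hp h0 h1 hρ

lemma ae_bddAbove_sum_range_sub_mul (hmeas : ∀ i, Measurable (ξ i)) (hindep : iIndepFun ξ μ)
    (hdist : ∀ i, μ.map (ξ i) = expMeasure 1) {a : ℝ} (ha : 1 < a) :
    ∀ᵐ ω ∂μ, BddAbove (range fun k : ℕ => ∑ i ∈ Finset.range k, ξ i ω - a * k) := by
  obtain ⟨ρ, h0, h1, hρ⟩ := exists_measure_mul_le_sum_range_le_pow hmeas hindep hdist ha
  refine ae_bddAbove_range_of_tsum_measure_nonneg_ne_top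
    (ne_top_of_le_ne_top ?_
      (ENNReal.tsum_le_tsum (g := fun k => ENNReal.ofReal (ρ ^ k)) fun k => ?_))
  · rw [← ENNReal.ofReal_tsum_of_nonneg (fun n => pow_nonneg h0 n)
      (summable_geometric_of_lt_one h0 h1)]
    exact ENNReal.ofReal_ne_top
  · simpa only [sub_nonneg] using hρ k

end IidExponential

lemma rpow_mul_sum_range_div_le {ξ : ℕ → ℝ} {lam p θ : ℝ} (hξ : ∀ i, 0 ≤ ξ i) (hlam : 0 ≤ lam)
    (hbdd : BddAbove (range fun k : ℕ => ∑ i ∈ Finset.range k, ξ i - lam * k)) (hp : 0 ≤ p)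
    (hθ : 0 < θ) {m n : ℕ} (hmn : m ≤ n) :
    (n * ((∑ i ∈ Finset.range m, ξ i) / ∑ i ∈ Finset.range n, ξ i)) ^ p ≤
      θ ^ (-p) * (max (2 ^ (p - 1)) 1 * ((lam * m) ^ p +
        (⨆ k : ℕ, ∑ i ∈ Finset.range k, ξ i - lam * k) ^ p)) +
      if ∑ i ∈ Finset.range n, ξ i ≤ θ * n then (n : ℝ) ^ p else 0 := by
  have hSm : 0 ≤ ∑ i ∈ Finset.range m, ξ i := Finset.sum_nonneg fun i _ => hξ i
  have hM : 0 ≤ ⨆ k : ℕ, ∑ i ∈ Finset.range k, ξ i - lam * k := by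
    simpa using le_ciSup hbdd 0
  have hSmM :
      ∑ i ∈ Finset.range m, ξ i ≤ lam * m + ⨆ k : ℕ, ∑ i ∈ Finset.range k, ξ i - lam * k := by
    linarith [le_ciSup hbdd m]
  split_ifs with hθn
  · refine le_add_of_nonneg_of_le (by positivity) (rpow_mul_div_le_rpow n.cast_nonneg hSm ?_ hp)
    exact Finset.sum_le_sum_of_subset_of_nonneg (Finset.range_subset_range.2 hmn) fun i _ _ => hξ i
  · rw [add_zero]
    exact rpow_mul_div_le_of_mul_lt n.cast_nonneg hθ (not_le.1 hθn) hSm hSmM (by positivity) hM hp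

section Selected

variable {Ω : Type*} [MeasurableSpace Ω] {μ : Measure Ω} {ξ : ℕ → Ω → ℝ} {σ : ℕ → Ω → ℕ}
  {p lam θ : ℝ}

lemma rpow_mul_lintegral_selected_ratio_le (hmeas : ∀ i, Measurable (ξ i))
    (hnonneg : ∀ᵐ ω ∂μ, ∀ i, 0 ≤ ξ i ω)
    (hbdd : ∀ᵐ ω ∂μ, BddAbove (range fun k : ℕ => ∑ i ∈ Finset.range k, ξ i ω - lam * k))
    (hlam : 0 ≤ lam) (hp : 0 ≤ p) (hθ : 0 < θ) {n : ℕ} (hσn : ∀ ω, σ n ω ≤ n) :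
    (n : ℝ≥0∞) ^ p * ∫⁻ ω, ENNReal.ofReal
        (((∑ i ∈ Finset.range (σ n ω), ξ i ω) / ∑ i ∈ Finset.range n, ξ i ω) ^ p) ∂μ ≤
      ENNReal.ofReal (θ ^ (-p)) *
          (ENNReal.ofReal (max (2 ^ (p - 1)) 1 * lam ^ p) *
              ∫⁻ ω, ENNReal.ofReal ((σ n ω : ℝ) ^ p) ∂μ +
            ENNReal.ofReal (max (2 ^ (p - 1)) 1) *
              ∫⁻ ω, ENNReal.ofReal ((⨆ k : ℕ, ∑ i ∈ Finset.range k, ξ i ω - lam * k) ^ p) ∂μ) +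
        (n : ℝ≥0∞) ^ p * μ {ω | ∑ i ∈ Finset.range n, ξ i ω ≤ θ * n} := by
  set A := {ω | ∑ i ∈ Finset.range n, ξ i ω ≤ θ * n}
  have hA : MeasurableSet A :=
    measurableSet_le (Finset.measurable_sum _ fun i _ => hmeas i) measurable_const
  have hM : Measurable fun ω => ⨆ k : ℕ, ∑ i ∈ Finset.range k, ξ i ω - lam * k :=
    Measurable.iSup fun k => (Finset.measurable_sum _ fun i _ => hmeas i).sub measurable_const
  have hMp : Measurable fun ω => ENNReal.ofReal (max (2 ^ (p - 1)) 1) *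
      ENNReal.ofReal ((⨆ k : ℕ, ∑ i ∈ Finset.range k, ξ i ω - lam * k) ^ p) := by
    fun_prop
  have hpt : ∀ᵐ ω ∂μ, (n : ℝ≥0∞) ^ p * ENNReal.ofReal
        (((∑ i ∈ Finset.range (σ n ω), ξ i ω) / ∑ i ∈ Finset.range n, ξ i ω) ^ p) ≤
      ENNReal.ofReal (θ ^ (-p)) * (ENNReal.ofReal (max (2 ^ (p - 1)) 1 * lam ^ p) *
        ENNReal.ofReal ((σ n ω : ℝ) ^ p) + ENNReal.ofReal (max (2 ^ (p - 1)) 1) *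
          ENNReal.ofReal ((⨆ k : ℕ, ∑ i ∈ Finset.range k, ξ i ω - lam * k) ^ p)) +
        A.indicator (fun _ => (n : ℝ≥0∞) ^ p) ω := by
    filter_upwards [hnonneg, hbdd] with ω hξ hbddω
    have hM0 : 0 ≤ ⨆ k : ℕ, ∑ i ∈ Finset.range k, ξ i ω - lam * k := by
      simpa using le_ciSup hbddω 0
    have hq : 0 ≤ (∑ i ∈ Finset.range (σ n ω), ξ i ω) / ∑ i ∈ Finset.range n, ξ i ω :=
      div_nonneg (Finset.sum_nonneg fun i _ => hξ i) (Finset.sum_nonneg fun i _ => hξ i)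
    rw [ENNReal.natCast_rpow_eq_ofReal n hp, ← ENNReal.ofReal_mul (by positivity),
      ← mul_rpow n.cast_nonneg hq]
    refine (ENNReal.ofReal_le_ofReal (rpow_mul_sum_range_div_le hξ hlam hbddω hp hθ (hσn ω))).trans
      (ENNReal.ofReal_add_le.trans (add_le_add (le_of_eq ?_) (le_of_eq ?_)))
    · rw [← ENNReal.ofReal_mul, ← ENNReal.ofReal_mul, ← ENNReal.ofReal_add, ← ENNReal.ofReal_mul,
        mul_rpow hlam (Nat.cast_nonneg _)]
      · congr 1; ring
      all_goals positivity
    · split_ifs with h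
      · rw [indicator_of_mem (show ω ∈ A from h)]
      · rw [indicator_of_notMem (show ω ∉ A from h), ENNReal.ofReal_zero]
  rw [← lintegral_const_mul' _ _ (by simp [hp]), ← lintegral_const_mul' _ _ ENNReal.ofReal_ne_top,
    ← lintegral_const_mul' _ _ ENNReal.ofReal_ne_top, ← lintegral_add_right _ hMp,
    ← lintegral_const_mul' _ _ ENNReal.ofReal_ne_top, ← lintegral_indicator_const hA,
    ← lintegral_add_right _ (measurable_const.indicator hA)]
  exact lintegral_mono_ae hpt

lemma limsup_moment_selected_ratio_le_rpow_neg_mul (hmeas : ∀ i, Measurable (ξ i))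
    (hnonneg : ∀ᵐ ω ∂μ, ∀ i, 0 ≤ ξ i ω)
    (hbdd : ∀ᵐ ω ∂μ, BddAbove (range fun k : ℕ => ∑ i ∈ Finset.range k, ξ i ω - lam * k))
    (hlam : 0 ≤ lam) (hp : 0 ≤ p) (hθ : 0 < θ)
    (htail : Tendsto (fun n : ℕ => (n : ℝ≥0∞) ^ p *
      μ {ω | ∑ i ∈ Finset.range n, ξ i ω ≤ θ * n}) atTop (𝓝 0))
    (hσ : ∀ᶠ n in atTop, ∀ ω, σ n ω ≤ n) :
    atTop.limsup (fun n : ℕ => (n : ℝ≥0∞) ^ p * ∫⁻ ω, ENNReal.ofReal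
        (((∑ i ∈ Finset.range (σ n ω), ξ i ω) / ∑ i ∈ Finset.range n, ξ i ω) ^ p) ∂μ) ≤
      ENNReal.ofReal (θ ^ (-p)) *
          (ENNReal.ofReal (max (2 ^ (p - 1)) 1 * lam ^ p) *
              atTop.limsup (fun n : ℕ => ∫⁻ ω, ENNReal.ofReal ((σ n ω : ℝ) ^ p) ∂μ) +
            ENNReal.ofReal (max (2 ^ (p - 1)) 1) *
              ∫⁻ ω, ENNReal.ofReal ((⨆ k : ℕ, ∑ i ∈ Finset.range k, ξ i ω - lam * k) ^ p) ∂μ) := by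
  set I := fun n : ℕ => ∫⁻ ω, ENNReal.ofReal ((σ n ω : ℝ) ^ p) ∂μ
  set m := ENNReal.ofReal (max (2 ^ (p - 1)) 1) *
    ∫⁻ ω, ENNReal.ofReal ((⨆ k : ℕ, ∑ i ∈ Finset.range k, ξ i ω - lam * k) ^ p) ∂μ
  calc _ ≤ atTop.limsup ((fun n => ENNReal.ofReal (θ ^ (-p)) *
          (ENNReal.ofReal (max (2 ^ (p - 1)) 1 * lam ^ p) * I n + m)) +
        fun n : ℕ => (n : ℝ≥0∞) ^ p * μ {ω | ∑ i ∈ Finset.range n, ξ i ω ≤ θ * n}) :=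
        limsup_le_limsup (hσ.mono fun n hσn =>
          rpow_mul_lintegral_selected_ratio_le hmeas hnonneg hbdd hlam hp hθ hσn)
    _ = _ := by
      rw [ENNReal.limsup_add_of_right_tendsto_zero htail,
        ENNReal.limsup_const_mul_of_ne_top ENNReal.ofReal_ne_top,
        limsup_add_const _ _ _ (by isBoundedDefault) (by isBoundedDefault),
        ENNReal.limsup_const_mul_of_ne_top ENNReal.ofReal_ne_top]

theorem limsup_moment_selected_ratio_le (hmeas : ∀ i, Measurable (ξ i))
    (hnonneg : ∀ᵐ ω ∂μ, ∀ i, 0 ≤ ξ i ω)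
    (hbdd : ∀ᵐ ω ∂μ, BddAbove (range fun k : ℕ => ∑ i ∈ Finset.range k, ξ i ω - lam * k))
    (hlam : 0 ≤ lam) (hp : 0 ≤ p)
    (htail : ∀ θ, 0 < θ → θ < 1 → Tendsto (fun n : ℕ => (n : ℝ≥0∞) ^ p *
      μ {ω | ∑ i ∈ Finset.range n, ξ i ω ≤ θ * n}) atTop (𝓝 0))
    (hσ : ∀ᶠ n in atTop, ∀ ω, σ n ω ≤ n) :
    atTop.limsup (fun n : ℕ => (n : ℝ≥0∞) ^ p * ∫⁻ ω, ENNReal.ofReal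
        (((∑ i ∈ Finset.range (σ n ω), ξ i ω) / ∑ i ∈ Finset.range n, ξ i ω) ^ p) ∂μ) ≤
      ENNReal.ofReal (max (2 ^ (p - 1)) 1 * lam ^ p) *
          atTop.limsup (fun n : ℕ => ∫⁻ ω, ENNReal.ofReal ((σ n ω : ℝ) ^ p) ∂μ) +
        ENNReal.ofReal (max (2 ^ (p - 1)) 1) *
          ∫⁻ ω, ENNReal.ofReal ((⨆ k : ℕ, ∑ i ∈ Finset.range k, ξ i ω - lam * k) ^ p) ∂μ := by
  refine ENNReal.le_of_forall_lt_one_le_ofReal_rpow_neg_mul (p := p) fun θ hθ0 hθ1 => ?_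
  exact limsup_moment_selected_ratio_le_rpow_neg_mul hmeas hnonneg hbdd hlam hp hθ0
    (htail θ hθ0 hθ1) hσ

end Selected

theorem limsup_moment_selected_orderStat_le_general
    {Ω : Type*} [MeasurableSpace Ω] (μ : Measure Ω)
    (p lam : ℝ) (hp : 0 < p) (hlam : 1 < lam)
    (ξ : ℕ → Ω → ℝ) (hmeas : ∀ i, Measurable (ξ i))
    (hindep : iIndepFun ξ μ)
    (hdist : ∀ i, μ.map (ξ i) = expMeasure 1)
    (σ : ℕ → Ω → ℕ)
    (hσrange : ∀ n : ℕ, 1 ≤ n → ∀ ω, σ n ω ∈ Finset.Icc 1 n) :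
    atTop.limsup (fun n : ℕ => (n : ENNReal) ^ p *
        ∫⁻ ω, ENNReal.ofReal
          (((∑ i ∈ Finset.range (σ n ω), ξ i ω) / (∑ i ∈ Finset.range n, ξ i ω)) ^ p) ∂μ) ≤
      ENNReal.ofReal (max ((2 : ℝ) ^ (p - 1)) 1 * lam ^ p) *
          atTop.limsup (fun n : ℕ => ∫⁻ ω, ENNReal.ofReal ((σ n ω : ℝ) ^ p) ∂μ)
        + ENNReal.ofReal (max ((2 : ℝ) ^ (p - 1)) 1) *
          ∫⁻ ω, ENNReal.ofReal
            ((⨆ k : ℕ, ((∑ i ∈ Finset.range k, ξ i ω) - lam * k)) ^ p) ∂μ := by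
  have hnonneg : ∀ᵐ ω ∂μ, ∀ i, 0 ≤ ξ i ω :=
    ae_all_iff.2 fun i => ae_nonneg_of_map_eq_expMeasure (hmeas i) (hdist i)
  have hσ : ∀ᶠ n in atTop, ∀ ω, σ n ω ≤ n :=
    eventually_atTop.2 ⟨1, fun n hn ω => (Finset.mem_Icc.1 (hσrange n hn ω)).2⟩
  exact limsup_moment_selected_ratio_le hmeas hnonneg
    (ae_bddAbove_sum_range_sub_mul hmeas hindep hdist hlam) (by linarith) hp.le
    (fun θ hθ0 hθ1 => tendsto_rpow_mul_measure_sum_range_le_mul hmeas hindep hdist hp.le hθ0 hθ1)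
    hσ

/-- For i.i.d. `Exp(1)` variables with partial sums `S_k`, `λ > 1`,
`M_λ = sup_k (S_k - λ k)`, and `{1,…,n}`-valued random variables `σ_n` (arbitrarily
dependent), with `Y_k = S_k/S_n`:
`limsup_n n^p E[Y_{σ_n}^p] ≤ c_p λ^p limsup_n E[σ_n^p] + c_p E[M_λ^p]`,
where `c_p = max (2^(p-1)) 1`. -/
theorem limsup_moment_selected_orderStat_le
    {Ω : Type*} [MeasurableSpace Ω] (μ : Measure Ω) [IsProbabilityMeasure μ]
    (p lam : ℝ) (hp : 0 < p) (hlam : 1 < lam)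
    (ξ : ℕ → Ω → ℝ) (hmeas : ∀ i, Measurable (ξ i))
    (hindep : iIndepFun ξ μ)
    (hdist : ∀ i, μ.map (ξ i) = expMeasure 1)
    (σ : ℕ → Ω → ℕ) (hσmeas : ∀ n, Measurable (σ n))
    (hσrange : ∀ n : ℕ, 1 ≤ n → ∀ ω, σ n ω ∈ Finset.Icc 1 n) :
    atTop.limsup (fun n : ℕ => (n : ENNReal) ^ p *
        ∫⁻ ω, ENNReal.ofReal
          (((∑ i ∈ Finset.range (σ n ω), ξ i ω) / (∑ i ∈ Finset.range n, ξ i ω)) ^ p) ∂μ) ≤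
      ENNReal.ofReal (max ((2 : ℝ) ^ (p - 1)) 1 * lam ^ p) *
          atTop.limsup (fun n : ℕ => ∫⁻ ω, ENNReal.ofReal ((σ n ω : ℝ) ^ p) ∂μ)
        + ENNReal.ofReal (max ((2 : ℝ) ^ (p - 1)) 1) *
          ∫⁻ ω, ENNReal.ofReal
            ((⨆ k : ℕ, ((∑ i ∈ Finset.range k, ξ i ω) - lam * k)) ^ p) ∂μ :=
  limsup_moment_selected_orderStat_le_general μ p lam hp hlam ξ hmeas hindep hdist σ hσrange
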